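/- arXiv:1611.09606 — 5 statements merged into one kernel-verified Lean document; each statement's English description precedes it below -/
import Mathlib

section
/- Unfolding for parameterized coinduction: G f x = f (x ⊔ G f x). -/
def cofix {X : Type*} [CompleteLattice X] (f : X → X) : X :=
  sSup {y | y ≤ f y}

def pG {X : Type*} [CompleteLattice X] (f : X → X) (x : X) : X :=
  cofix (fun y => f (x ⊔ y))

theorem pG_unfold {X : Type*} [CompleteLattice X] (f : X → X)
    (hf : Monotone f) (x : X) : pG f x = f (x ⊔ pG f x) := by
  have hm : Monotone (fun y => f (x ⊔ y)) :=
    fun a b h => hf (sup_le_sup_left h x)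
  have : pG f x = OrderHom.gfp ⟨fun y => f (x ⊔ y), hm⟩ := rfl
  rw [this]
  exact (OrderHom.map_gfp ⟨fun y => f (x ⊔ y), hm⟩).symm
end

section
/- Accumulation for parameterized coinduction: y ≤ G f x if and only if y ≤ G f (x ⊔ y). -/
lemma le_cofix {X : Type*} [CompleteLattice X] {f : X → X} {y : X}
    (h : y ≤ f y) : y ≤ cofix f := le_sSup h

lemma cofix_postfixed {X : Type*} [CompleteLattice X] {f : X → X}
    (hf : Monotone f) : cofix f ≤ f (cofix f) := by
  apply sSup_le
  intro y hy
  exact hy.trans (hf (le_sSup hy))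

theorem pG_accumulate {X : Type*} [CompleteLattice X] (f : X → X)
    (hf : Monotone f) (x y : X) : y ≤ pG f x ↔ y ≤ pG f (x ⊔ y) := by
  have hmx : ∀ z : X, Monotone fun w => f (z ⊔ w) :=
    fun z => fun a b hab => hf (sup_le_sup_left hab z)
  constructor
  · intro h
    refine h.trans (le_cofix ?_)
    have := cofix_postfixed (hmx x)
    refine this.trans (hf ?_)
    have : x ⊔ y ⊔ pG f x = x ⊔ pG f x := by
      rw [sup_assoc, sup_eq_right.mpr h]
    exact le_of_eq this.symm
  · intro h
    refine h.trans (le_cofix ?_)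
    have hpost := cofix_postfixed (hmx (x ⊔ y))
    refine hpost.trans (hf ?_)
    have : x ⊔ y ⊔ pG f (x ⊔ y) = x ⊔ pG f (x ⊔ y) := by
      rw [sup_assoc, sup_eq_right.mpr h]
    exact le_of_eq this
end

section
/- Strong coinduction principle: if for all z with x ≤ z and y ≤ z we have y ≤ G f z, then y ≤ G f x. -/
lemma cofix_postfix {X : Type*} [CompleteLattice X] (g : X → X) (hg : Monotone g) :
    cofix g ≤ g (cofix g) := by
  apply sSup_le
  intro y hy
  exact le_trans hy (hg (le_sSup hy))

theorem pG_coinduction {X : Type*} [CompleteLattice X] (f : X → X)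
    (hf : Monotone f) (x y : X)
    (h : ∀ z, x ≤ z → y ≤ z → y ≤ pG f z) : y ≤ pG f x := by
  have hy : y ≤ pG f (x ⊔ y) := h (x ⊔ y) le_sup_left le_sup_right
  set G := pG f (x ⊔ y) with hG
  have hpost : G ≤ f (x ⊔ y ⊔ G) :=
    cofix_postfix (fun z => f (x ⊔ y ⊔ z)) (fun a b hab => hf (sup_le_sup_left hab _))
  have : x ⊔ y ⊔ G = x ⊔ G := by
    rw [sup_assoc, sup_eq_right.mpr hy]
  have hG' : G ≤ f (x ⊔ G) := this ▸ hpost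
  exact le_trans hy (le_sSup hG')
end

section
/- Bisimilarity on an internally deterministic reduction system is transitive: if σ₁ ~ σ₂ and σ₂ ~ σ₃ then σ₁ ~ σ₃. -/
variable {S E V : Type*}

/-- A configuration is terminal if it has no transitions. -/
def Terminal (step : S → E → S → Prop) (σ : S) : Prop :=
  ∀ φ σ', ¬ step σ φ σ'

/-- The silent step relation. -/
def Silent (step : S → E → S → Prop) (τ : E) (σ σ' : S) : Prop :=
  step σ τ σ'

/-- σ terminates with result w. -/
def Terminates (step : S → E → S → Prop) (τ : E) (res : S → Option V)
    (σ : S) (w : Option V) : Prop :=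
  ∃ σ', Relation.ReflTransGen (Silent step τ) σ σ' ∧ Terminal step σ' ∧ res σ' = w

/-- σ is ready: it can take a step, and its next event cannot be τ. -/
def Ready (step : S → E → S → Prop) (τ : E) (σ : S) : Prop :=
  (∃ φ σ', step σ φ σ') ∧ ∀ φ σ', step σ φ σ' → φ ≠ τ

/-- Generating function for bisimilarity: rules Bisim-Term, Bisim-Silent, Bisim-Extern. -/
def BisimF (step : S → E → S → Prop) (τ : E) (res : S → Option V)
    (R : S → S → Prop) (σ₁ σ₂ : S) : Prop :=
  (∃ w, Terminates step τ res σ₁ w ∧ Terminates step τ res σ₂ w)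
  ∨ (∃ σ₁' σ₂', Relation.TransGen (Silent step τ) σ₁ σ₁' ∧
        Relation.TransGen (Silent step τ) σ₂ σ₂' ∧ R σ₁' σ₂')
  ∨ (∃ σ₁' σ₂', Relation.ReflTransGen (Silent step τ) σ₁ σ₁' ∧
        Relation.ReflTransGen (Silent step τ) σ₂ σ₂' ∧
        Ready step τ σ₁' ∧ Ready step τ σ₂' ∧
        (∀ φ σ₁'', step σ₁' φ σ₁'' → ∃ σ₂'', step σ₂' φ σ₂'' ∧ R σ₁'' σ₂'') ∧
        (∀ φ σ₂'', step σ₂' φ σ₂'' → ∃ σ₁'', step σ₁' φ σ₁'' ∧ R σ₂'' σ₁''))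

/-- Generating function for similarity: additionally the rule Sim-Error. -/
def SimF (step : S → E → S → Prop) (τ : E) (res : S → Option V)
    (R : S → S → Prop) (σ₁ σ₂ : S) : Prop :=
  BisimF step τ res R σ₁ σ₂
  ∨ (∃ σ₁', Relation.ReflTransGen (Silent step τ) σ₁ σ₁' ∧
        Terminal step σ₁' ∧ res σ₁' = none)

/-- Bisimilarity: the greatest relation closed under the rules. -/
def Bisim (step : S → E → S → Prop) (τ : E) (res : S → Option V)
    (σ₁ σ₂ : S) : Prop :=
  ∃ R : S → S → Prop, (∀ a b, R a b → BisimF step τ res R a b) ∧ R σ₁ σ₂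

/-- Similarity: the greatest relation closed under the rules incl. Sim-Error. -/
def Sim (step : S → E → S → Prop) (τ : E) (res : S → Option V)
    (σ₁ σ₂ : S) : Prop :=
  ∃ R : S → S → Prop, (∀ a b, R a b → SimF step τ res R a b) ∧ R σ₁ σ₂

/-- Action-determinism. -/
def ActionDet (step : S → E → S → Prop) : Prop :=
  ∀ σ φ σ₁ σ₂, step σ φ σ₁ → step σ φ σ₂ → σ₁ = σ₂

/-- τ-determinism. -/
def TauDet (step : S → E → S → Prop) (τ : E) : Prop :=
  ∀ σ φ σ₁ σ₂, step σ φ σ₁ → step σ τ σ₂ → φ = τ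

/-- Results occur only at terminal configurations. -/
def ResTerminal (step : S → E → S → Prop) (res : S → Option V) : Prop :=
  ∀ σ v, res σ = some v → Terminal step σ

section Aux

open Relation

variable {S : Type*}

/-- Length-indexed runs. -/
inductive RunN (r : S → S → Prop) : ℕ → S → S → Prop
  | refl (a : S) : RunN r 0 a a
  | head {n : ℕ} {a b c : S} : r a b → RunN r n b c → RunN r (n+1) a c

lemma RunN.to_rtg {r : S → S → Prop} : ∀ {n : ℕ} {a b : S}, RunN r n a b →
    ReflTransGen r a b := by
  intro n a b h
  induction h with
  | refl a => exact ReflTransGen.refl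
  | head h _ ih => exact ReflTransGen.head h ih

lemma RunN.tail {r : S → S → Prop} : ∀ {n : ℕ} {a b c : S}, RunN r n a b → r b c →
    RunN r (n+1) a c := by
  intro n a b c h hbc
  induction h with
  | refl a => exact RunN.head hbc (RunN.refl _)
  | head h _ ih => exact RunN.head h (ih hbc)

lemma rtg_runN {r : S → S → Prop} {a b : S} (h : ReflTransGen r a b) :
    ∃ n, RunN r n a b := by
  induction h with
  | refl => exact ⟨0, RunN.refl a⟩
  | tail _ hbc ih => obtain ⟨n, hn⟩ := ih; exact ⟨n+1, hn.tail hbc⟩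

lemma conf_aux {r : S → S → Prop} (det : ∀ σ x y, r σ x → r σ y → x = y) :
    ∀ {a x : S}, ReflTransGen r a x → ∀ y, ReflTransGen r a y →
      ReflTransGen r x y ∨ ReflTransGen r y x := by
  intro a x hx
  induction hx using Relation.ReflTransGen.head_induction_on with
  | refl => exact fun y hy => Or.inl hy
  | head h tail ih =>
    intro y hy
    rcases Relation.ReflTransGen.cases_head hy with rfl | ⟨d, hd, hdy⟩
    · exact Or.inr (ReflTransGen.head h tail)
    · cases det _ _ _ h hd
      exact ih y hdy

lemma eq_of_noStep_rtg {r : S → S → Prop} {x z : S} (noStep : ∀ y, ¬ r x y)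
    (h : ReflTransGen r x z) : z = x := by
  rcases Relation.ReflTransGen.cases_head h with rfl | ⟨c, hc, _⟩
  · rfl
  · exact absurd hc (noStep c)

lemma reach_sub {r : S → S → Prop} (det : ∀ σ x y, r σ x → r σ y → x = y)
    {e : S} (noStep : ∀ y, ¬ r e y) :
    ∀ {a x : S}, ReflTransGen r a x → ∀ {n : ℕ}, RunN r n a e →
      ∃ m, m ≤ n ∧ RunN r m x e := by
  intro a x hax
  induction hax with
  | refl => exact fun {n} hn => ⟨n, le_refl n, hn⟩
  | tail _ hxy ih =>
    intro n hn
    obtain ⟨m, hm, hrun⟩ := ih hn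
    cases hrun with
    | refl => exact absurd hxy (noStep _)
    | @head k _ _ _ h rest =>
      cases det _ _ _ h hxy
      exact ⟨k, by omega, rest⟩

lemma reach_lt {r : S → S → Prop} (det : ∀ σ x y, r σ x → r σ y → x = y)
    {e : S} (noStep : ∀ y, ¬ r e y) {a x : S} (h : TransGen r a x)
    {n : ℕ} (hn : RunN r n a e) : ∃ m, m < n ∧ RunN r m x e := by
  obtain ⟨c, hac, hcx⟩ := Relation.TransGen.head'_iff.mp h
  cases hn with
  | refl => exact absurd hac (noStep _)
  | head h rest =>
    cases det _ _ _ h hac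
    obtain ⟨m, hm, hrun⟩ := reach_sub det noStep hcx rest
    exact ⟨m, by omega, hrun⟩

end Aux

section BisimLemmas

open Relation

variable {S E V : Type*} (step : S → E → S → Prop) (τ : E) (res : S → Option V)

lemma sdet (hA : ActionDet step) :
    ∀ σ x y, Silent step τ σ x → Silent step τ σ y → x = y :=
  fun σ x y hx hy => hA σ τ x y hx hy

lemma noStep_of_terminal {e : S} (h : Terminal step e) :
    ∀ y, ¬ Silent step τ e y := fun y hy => h τ y hy

lemma noStep_of_ready {e : S} (h : Ready step τ e) :
    ∀ y, ¬ Silent step τ e y := fun y hy => h.2 τ y hy rfl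

lemma bisim_terminates (hA : ActionDet step) {R : S → S → Prop}
    (hpost : ∀ a b, R a b → BisimF step τ res R a b) :
    ∀ (n : ℕ) (a b t : S), R a b → RunN (Silent step τ) n a t → Terminal step t →
      Terminates step τ res b (res t) := by
  intro n
  induction n using Nat.strong_induction_on with
  | _ n ih =>
  intro a b t hRab hrun hterm
  rcases hpost a b hRab with ⟨w, ⟨t', hrt', ht', hres'⟩, hb⟩ | ⟨a', b', ha, hb, hR'⟩ |
    ⟨x, y, hax, _, hrx, _, _, _⟩
  · rcases conf_aux (sdet step τ hA) hrt' _ hrun.to_rtg with h1 | h2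
    · have he := eq_of_noStep_rtg (noStep_of_terminal step τ ht') h1
      subst he
      rcases hb with ⟨u, h1, h2, h3⟩
      exact ⟨u, h1, h2, by rw [h3, ← hres']⟩
    · have he := eq_of_noStep_rtg (noStep_of_terminal step τ hterm) h2
      subst he
      rcases hb with ⟨u, h1, h2, h3⟩
      exact ⟨u, h1, h2, by rw [h3, ← hres']⟩
  · obtain ⟨m, hm, hrun'⟩ := reach_lt (sdet step τ hA)
      (noStep_of_terminal step τ hterm) ha hrun
    obtain ⟨t', h1, h2, h3⟩ := ih m hm a' b' t hR' hrun' hterm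
    exact ⟨t', hb.to_reflTransGen.trans h1, h2, h3⟩
  · obtain ⟨m, _, hrun'⟩ := reach_sub (sdet step τ hA)
      (noStep_of_terminal step τ hterm) hax hrun
    cases hrun' with
    | refl =>
      obtain ⟨φ, σ', hstep⟩ := hrx.1
      exact absurd hstep (hterm φ σ')
    | head h _ => exact absurd h (noStep_of_ready step τ hrx _)

lemma bisimF_mono {R R' : S → S → Prop} (hle : ∀ x y, R x y → R' x y) {a b : S}
    (h : BisimF step τ res R a b) : BisimF step τ res R' a b := by
  rcases h with ⟨w, h1, h2⟩ | ⟨a', b', h1, h2, h3⟩ | ⟨a', b', h1, h2, h3, h4, h5, h6⟩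
  · exact Or.inl ⟨w, h1, h2⟩
  · exact Or.inr (Or.inl ⟨a', b', h1, h2, hle _ _ h3⟩)
  · refine Or.inr (Or.inr ⟨a', b', h1, h2, h3, h4, ?_, ?_⟩)
    · intro φ u hu
      obtain ⟨v, hv, hR⟩ := h5 φ u hu
      exact ⟨v, hv, hle _ _ hR⟩
    · intro φ v hv
      obtain ⟨u, hu, hR⟩ := h6 φ v hv
      exact ⟨u, hu, hle _ _ hR⟩

lemma bisimF_swap {R : S → S → Prop} {a b : S} (h : BisimF step τ res R a b) :
    BisimF step τ res (fun x y => R x y ∨ R y x) b a := by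
  rcases h with ⟨w, h1, h2⟩ | ⟨a', b', h1, h2, h3⟩ | ⟨a', b', h1, h2, h3, h4, h5, h6⟩
  · exact Or.inl ⟨w, h2, h1⟩
  · exact Or.inr (Or.inl ⟨b', a', h2, h1, Or.inr h3⟩)
  · refine Or.inr (Or.inr ⟨b', a', h2, h1, h4, h3, ?_, ?_⟩)
    · intro φ v hv
      obtain ⟨u, hu, hR⟩ := h6 φ v hv
      exact ⟨u, hu, Or.inl hR⟩
    · intro φ u hu
      obtain ⟨v, hv, hR⟩ := h5 φ u hu
      exact ⟨v, hv, Or.inl hR⟩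

lemma bisim_symm {a b : S} (h : Bisim step τ res a b) : Bisim step τ res b a := by
  obtain ⟨R, hpost, hab⟩ := h
  refine ⟨fun x y => R x y ∨ R y x, ?_, Or.inr hab⟩
  rintro x y (hxy | hyx)
  · exact bisimF_mono step τ res (fun u v h => Or.inl h) (hpost x y hxy)
  · exact bisimF_swap step τ res (hpost y x hyx)

lemma bisim_ready (hA : ActionDet step) {R : S → S → Prop}
    (hpost : ∀ a b, R a b → BisimF step τ res R a b) :
    ∀ (n : ℕ) (a b a' : S), R a b → RunN (Silent step τ) n a a' → Ready step τ a' →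
      ∃ b', ReflTransGen (Silent step τ) b b' ∧ Ready step τ b' ∧
        (∀ φ x, step a' φ x → ∃ y, step b' φ y ∧ Bisim step τ res x y) ∧
        (∀ φ y, step b' φ y → ∃ x, step a' φ x ∧ Bisim step τ res y x) := by
  intro n
  induction n using Nat.strong_induction_on with
  | _ n ih =>
  intro a b a' hRab hrun hready
  rcases hpost a b hRab with ⟨w, ⟨t', hrt', ht', _⟩, _⟩ | ⟨a₁, b₁, ha, hb, hR'⟩ |
    ⟨x, y, hax, hby, hrx, hry, f, g⟩
  · rcases conf_aux (sdet step τ hA) hrt' _ hrun.to_rtg with h1 | h2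
    · have he := eq_of_noStep_rtg (noStep_of_terminal step τ ht') h1
      subst he
      obtain ⟨φ, σ', hstep⟩ := hready.1
      exact absurd hstep (ht' φ σ')
    · have he := eq_of_noStep_rtg (noStep_of_ready step τ hready) h2
      subst he
      obtain ⟨φ, σ', hstep⟩ := hready.1
      exact absurd hstep (ht' φ σ')
  · obtain ⟨m, hm, hrun'⟩ := reach_lt (sdet step τ hA)
      (noStep_of_ready step τ hready) ha hrun
    obtain ⟨b', h1, h2, h3, h4⟩ := ih m hm a₁ b₁ a' hR' hrun' hready
    exact ⟨b', hb.to_reflTransGen.trans h1, h2, h3, h4⟩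
  · have hx : x = a' := by
      rcases conf_aux (sdet step τ hA) hax _ hrun.to_rtg with h1 | h2
      · exact (eq_of_noStep_rtg (noStep_of_ready step τ hrx) h1).symm
      · exact eq_of_noStep_rtg (noStep_of_ready step τ hready) h2
    subst hx
    refine ⟨y, hby, hry, ?_, ?_⟩
    · intro φ u hu
      obtain ⟨v, hv, hRv⟩ := f φ u hu
      exact ⟨v, hv, R, hpost, hRv⟩
    · intro φ v hv
      obtain ⟨u, hu, hRu⟩ := g φ v hv
      exact ⟨u, hu, R, hpost, hRu⟩

/-- Divergence. -/
def Diverges (σ : S) : Prop :=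
  ∀ x, ReflTransGen (Silent step τ) σ x → ∃ y, Silent step τ x y

lemma trichotomy (σ : S) :
    (∃ w, Terminates step τ res σ w) ∨
    (∃ x, ReflTransGen (Silent step τ) σ x ∧ Ready step τ x) ∨ Diverges step τ σ := by
  classical
  by_cases h1 : ∃ w, Terminates step τ res σ w
  · exact Or.inl h1
  by_cases h2 : ∃ x, ReflTransGen (Silent step τ) σ x ∧ Ready step τ x
  · exact Or.inr (Or.inl h2)
  refine Or.inr (Or.inr ?_)
  intro x hx
  by_contra hno
  push_neg at hno
  by_cases hstep : ∃ φ y, step x φ y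
  · refine h2 ⟨x, hx, hstep, ?_⟩
    intro φ y h hφ
    exact hno y (hφ ▸ h)
  · push_neg at hstep
    exact h1 ⟨res x, x, hx, fun φ y h => hstep φ y h, rfl⟩

lemma diverges_line (hA : ActionDet step) {b b' : S}
    (hline : ReflTransGen (Silent step τ) b b' ∨ ReflTransGen (Silent step τ) b' b)
    (hdiv : Diverges step τ b) : Diverges step τ b' := by
  rcases hline with h | h
  · exact fun x hx => hdiv x (h.trans hx)
  · intro x hx
    rcases conf_aux (sdet step τ hA) hx _ h with h1 | h2
    · rcases Relation.ReflTransGen.cases_head h1 with rfl | ⟨c, hc, _⟩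
      · exact hdiv x ReflTransGen.refl
      · exact ⟨c, hc⟩
    · exact hdiv x h2

lemma terminates_line (hA : ActionDet step) {b b' : S} {w : Option V}
    (hline : ReflTransGen (Silent step τ) b b' ∨ ReflTransGen (Silent step τ) b' b)
    (h : Terminates step τ res b w) : Terminates step τ res b' w := by
  obtain ⟨t, hrt, hterm, hres⟩ := h
  rcases hline with hl | hl
  · rcases conf_aux (sdet step τ hA) hrt _ hl with h1 | h2
    · have he := eq_of_noStep_rtg (noStep_of_terminal step τ hterm) h1
      exact ⟨t, he ▸ ReflTransGen.refl, hterm, hres⟩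
    · exact ⟨t, h2, hterm, hres⟩
  · exact ⟨t, hl.trans hrt, hterm, hres⟩

lemma ready_line (hA : ActionDet step) {b b' b₀ : S}
    (hline : ReflTransGen (Silent step τ) b b' ∨ ReflTransGen (Silent step τ) b' b)
    (hrb : ReflTransGen (Silent step τ) b b₀) (hready : Ready step τ b₀) :
    ReflTransGen (Silent step τ) b' b₀ := by
  rcases hline with hl | hl
  · rcases conf_aux (sdet step τ hA) hrb _ hl with h1 | h2
    · have he := eq_of_noStep_rtg (noStep_of_ready step τ hready) h1
      exact he ▸ ReflTransGen.refl
    · exact h2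
  · exact hl.trans hrb

end BisimLemmas

theorem bisim_trans (step : S → E → S → Prop) (τ : E) (res : S → Option V)
    (hA : ActionDet step) (hT : TauDet step τ) (hR : ResTerminal step res)
    {σ₁ σ₂ σ₃ : S} (h₁ : Bisim step τ res σ₁ σ₂) (h₂ : Bisim step τ res σ₂ σ₃) :
    Bisim step τ res σ₁ σ₃ := by
  classical
  set s := Silent step τ with hs
  refine ⟨fun a c => ∃ b b', Bisim step τ res a b ∧ Bisim step τ res b' c ∧
      (Relation.ReflTransGen s b b' ∨ Relation.ReflTransGen s b' b), ?_, σ₂, σ₂, h₁, h₂,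
      Or.inl Relation.ReflTransGen.refl⟩
  rintro a c ⟨b, b', hab, hbc, hline⟩
  rcases trichotomy step τ res b with ⟨w, htw⟩ | ⟨b₀, hrb, hready⟩ | hdiv
  · -- b terminates with w : both a and c terminate with w
    refine Or.inl ⟨w, ?_, ?_⟩
    · obtain ⟨Rba, hpost, hba⟩ := bisim_symm step τ res hab
      obtain ⟨t, hrt, hterm, hres⟩ := htw
      obtain ⟨n, hrun⟩ := rtg_runN hrt
      have := bisim_terminates step τ res hA hpost n b a t hba hrun hterm
      rwa [hres] at this
    · have htw' := terminates_line step τ res hA hline htw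
      obtain ⟨Rbc, hpost, hb'c⟩ := hbc
      obtain ⟨t, hrt, hterm, hres⟩ := htw'
      obtain ⟨n, hrun⟩ := rtg_runN hrt
      have := bisim_terminates step τ res hA hpost n b' c t hb'c hrun hterm
      rwa [hres] at this
  · -- b reaches the ready state b₀
    have hrb' : Relation.ReflTransGen s b' b₀ := ready_line step τ hA hline hrb hready
    obtain ⟨Rba, hpostba, hba⟩ := bisim_symm step τ res hab
    obtain ⟨n, hrun⟩ := rtg_runN hrb
    obtain ⟨a₀, hra, hreada, F1, G1⟩ :=
      bisim_ready step τ res hA hpostba n b a b₀ hba hrun hready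
    obtain ⟨Rbc, hpostbc, hb'c⟩ := hbc
    obtain ⟨m, hrun'⟩ := rtg_runN hrb'
    obtain ⟨c₀, hrc, hreadc, F2, G2⟩ :=
      bisim_ready step τ res hA hpostbc m b' c b₀ hb'c hrun' hready
    refine Or.inr (Or.inr ⟨a₀, c₀, hra, hrc, hreada, hreadc, ?_, ?_⟩)
    · intro φ u hu
      obtain ⟨x, hx, hbxu⟩ := G1 φ u hu
      obtain ⟨z, hz, hbxz⟩ := F2 φ x hx
      exact ⟨z, hz, x, x, hbxu, hbxz, Or.inl Relation.ReflTransGen.refl⟩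
    · intro φ z hz
      obtain ⟨x, hx, hbzx⟩ := G2 φ z hz
      obtain ⟨u, hu, hbxu⟩ := F1 φ x hx
      exact ⟨u, hu, x, x, hbzx, hbxu, Or.inl Relation.ReflTransGen.refl⟩
  · -- b diverges
    have hdiv' : Diverges step τ b' := diverges_line step τ hA hline hdiv
    obtain ⟨Rab, hpostab, habR⟩ := hab
    obtain ⟨Rbc, hpostbc, hb'cR⟩ := hbc
    rcases hpostab a b habR with ⟨w, _, ⟨t, hrt, hterm, _⟩⟩ | ⟨a', b₁, ha, hb, hRab'⟩ |
      ⟨x, y, _, hby, _, hry, _, _⟩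
    · obtain ⟨y, hy⟩ := hdiv t hrt
      exact absurd hy (hterm τ y)
    · rcases hpostbc b' c hb'cR with ⟨w, ⟨t, hrt, hterm, _⟩, _⟩ | ⟨b₂, c', hb', hc, hRbc'⟩ |
        ⟨x, y, hbx, _, hrx, _, _, _⟩
      · obtain ⟨y, hy⟩ := hdiv' t hrt
        exact absurd hy (hterm τ y)
      · refine Or.inr (Or.inl ⟨a', c', ha, hc, b₁, b₂,
          ⟨Rab, hpostab, hRab'⟩, ⟨Rbc, hpostbc, hRbc'⟩, ?_⟩)
        rcases hline with hl | hl
        · exact conf_aux (sdet step τ hA) hb.to_reflTransGen _ (hl.trans hb'.to_reflTransGen)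
        · exact conf_aux (sdet step τ hA) (hl.trans hb.to_reflTransGen) _ hb'.to_reflTransGen
      · obtain ⟨z, hz⟩ := hdiv' x hbx
        exact absurd rfl (hrx.2 τ z hz)
    · obtain ⟨z, hz⟩ := hdiv y hby
      exact absurd rfl (hry.2 τ z hz)
end

section
/- Similarity, defined as the greatest relation closed under Bisim-Silent, Bisim-Term, Bisim-Extern, and Sim-Error, is a preorder on configurations of an internally deterministic reduction system. -/
variable {S E V : Type*}

section SimHelpers

variable {S E V : Type*} {step : S → E → S → Prop} {τ : E} {res : S → Option V}

lemma silent_lin (hA : ActionDet step) {σ a : S}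
    (h1 : Relation.ReflTransGen (Silent step τ) σ a) :
    ∀ b, Relation.ReflTransGen (Silent step τ) σ b →
      Relation.ReflTransGen (Silent step τ) a b ∨
      Relation.ReflTransGen (Silent step τ) b a := by
  induction h1 using Relation.ReflTransGen.head_induction_on with
  | refl => exact fun b hb => Or.inl hb
  | head hstep htail ih =>
    intro b hb
    rcases hb.cases_head with rfl | ⟨c, hc, hcb⟩
    · exact Or.inr (Relation.ReflTransGen.head hstep htail)
    · cases hA _ _ _ _ hstep hc
      exact ih b hcb

lemma ready_rtg_eq {σ y : S} (hr : Ready step τ σ)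
    (h : Relation.ReflTransGen (Silent step τ) σ y) : y = σ := by
  rcases h.cases_head with rfl | ⟨c, hc, _⟩
  · rfl
  · exact absurd rfl (hr.2 τ c hc)

lemma terminal_rtg_eq {σ y : S} (ht : Terminal step σ)
    (h : Relation.ReflTransGen (Silent step τ) σ y) : y = σ := by
  rcases h.cases_head with rfl | ⟨c, hc, _⟩
  · rfl
  · exact absurd hc (ht τ c)

lemma terminates_prepend {x σ : S} {w : Option V}
    (h : Relation.ReflTransGen (Silent step τ) x σ)
    (ht : Terminates step τ res σ w) : Terminates step τ res x w := by
  obtain ⟨t, h1, h2, h3⟩ := ht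
  exact ⟨t, h.trans h1, h2, h3⟩

lemma terminates_forward (hA : ActionDet step) {σ σ' : S} {w : Option V}
    (ht : Terminates step τ res σ w)
    (h : Relation.ReflTransGen (Silent step τ) σ σ') : Terminates step τ res σ' w := by
  obtain ⟨t, h1, h2, h3⟩ := ht
  rcases silent_lin hA h t h1 with h' | h'
  · exact ⟨t, h', h2, h3⟩
  · rw [terminal_rtg_eq h2 h']
    exact ⟨t, Relation.ReflTransGen.refl, h2, h3⟩

lemma terminates_unique (hA : ActionDet step) {σ : S} {w₁ w₂ : Option V}
    (h1 : Terminates step τ res σ w₁) (h2 : Terminates step τ res σ w₂) : w₁ = w₂ := by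
  obtain ⟨t₁, a1, a2, a3⟩ := h1
  obtain ⟨t₂, b1, b2, b3⟩ := h2
  rcases silent_lin hA a1 t₂ b1 with h | h
  · cases terminal_rtg_eq a2 h; rw [← a3, ← b3]
  · cases terminal_rtg_eq b2 h; rw [← a3, ← b3]

lemma terminates_ready_false (hA : ActionDet step) {σ σ₁ : S} {w : Option V}
    (ht : Terminates step τ res σ w)
    (h : Relation.ReflTransGen (Silent step τ) σ σ₁) (hr : Ready step τ σ₁) : False := by
  obtain ⟨t, h1, h2, h3⟩ := ht
  have hterm : Terminal step σ₁ := by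
    rcases silent_lin hA h t h1 with h' | h'
    · cases ready_rtg_eq hr h'; exact h2
    · cases terminal_rtg_eq h2 h'; exact h2
  obtain ⟨φ, x, hx⟩ := hr.1
  exact hterm φ x hx

/-- Length-indexed silent chains, for induction on chain length. -/
inductive SN (r : S → S → Prop) : ℕ → S → S → Prop
  | refl (a : S) : SN r 0 a a
  | head {a b c : S} {n : ℕ} : r a b → SN r n b c → SN r (n + 1) a c

lemma sn_to_rtg {r : S → S → Prop} {n : ℕ} {a b : S} (h : SN r n a b) :
    Relation.ReflTransGen r a b := by
  induction h with
  | refl => exact Relation.ReflTransGen.refl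
  | head h _ ih => exact Relation.ReflTransGen.head h ih

lemma sn_tail {r : S → S → Prop} {n : ℕ} {a b c : S} (h : SN r n a b) (h' : r b c) :
    SN r (n + 1) a c := by
  induction h with
  | refl => exact SN.head h' (SN.refl _)
  | head h hs ih => exact SN.head h (ih h')

lemma rtg_to_sn {r : S → S → Prop} {a b : S} (h : Relation.ReflTransGen r a b) :
    ∃ n, SN r n a b := by
  induction h with
  | refl => exact ⟨0, SN.refl _⟩
  | tail _ h' ih => obtain ⟨n, hn⟩ := ih; exact ⟨n + 1, sn_tail hn h'⟩

lemma sn_after (hA : ActionDet step) {u v t : S}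
    (h : Relation.ReflTransGen (Silent step τ) u v) :
    ∀ n, SN (Silent step τ) n u t → Terminal step t →
      ∃ m ≤ n, SN (Silent step τ) m v t := by
  induction h using Relation.ReflTransGen.head_induction_on with
  | refl => exact fun n hn _ => ⟨n, le_rfl, hn⟩
  | head hstep _ ih =>
    intro n hn ht
    cases hn with
    | refl => exact absurd hstep (ht _ _)
    | head hstep' hsn' =>
      cases hA _ _ _ _ hstep' hstep
      obtain ⟨m, hm, hx⟩ := ih _ hsn' ht
      exact ⟨m, hm.trans (Nat.le_succ _), hx⟩

lemma tg_after (hA : ActionDet step) {u p t : S} {n : ℕ}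
    (h : Relation.TransGen (Silent step τ) u p)
    (hsn : SN (Silent step τ) n u t) (ht : Terminal step t) :
    ∃ m < n, SN (Silent step τ) m p t := by
  obtain ⟨x, hx, hxp⟩ := Relation.TransGen.head'_iff.mp h
  cases hsn with
  | refl => exact absurd hx (ht _ _)
  | head hstep hsn' =>
    cases hA _ _ _ _ hstep hx
    obtain ⟨m, hm, hx'⟩ := sn_after hA hxp _ hsn' ht
    exact ⟨m, Nat.lt_succ_of_le hm, hx'⟩

lemma simF_mono {R R' : S → S → Prop} (h : ∀ x y, R x y → R' x y) {a b : S} :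
    SimF step τ res R a b → SimF step τ res R' a b := by
  rintro ((hT | ⟨x, y, h1, h2, h3⟩ | ⟨x, y, h1, h2, r1, r2, m1, m2⟩) | hE)
  · exact Or.inl (Or.inl hT)
  · exact Or.inl (Or.inr (Or.inl ⟨x, y, h1, h2, h _ _ h3⟩))
  · exact Or.inl (Or.inr (Or.inr ⟨x, y, h1, h2, r1, r2,
      fun φ s hs => (m1 φ s hs).imp fun t ht => ⟨ht.1, h _ _ ht.2⟩,
      fun φ s hs => (m2 φ s hs).imp fun t ht => ⟨ht.1, h _ _ ht.2⟩⟩))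
  · exact Or.inr hE

lemma sim_unfold {a b : S} (h : Sim step τ res a b) : SimF step τ res (Sim step τ res) a b := by
  obtain ⟨R, hcl, hab⟩ := h
  exact simF_mono (fun x y hxy => ⟨R, hcl, hxy⟩) (hcl _ _ hab)

/-- Prepending silent steps on both sides preserves similarity. -/
lemma sim_prepend {x x₀ y y₀ : S}
    (hx : Relation.ReflTransGen (Silent step τ) x x₀)
    (hy : Relation.ReflTransGen (Silent step τ) y y₀)
    (hs : Sim step τ res x₀ y₀) : Sim step τ res x y := by
  refine ⟨fun u v => ∃ u₀ v₀, Relation.ReflTransGen (Silent step τ) u u₀ ∧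
    Relation.ReflTransGen (Silent step τ) v v₀ ∧ Sim step τ res u₀ v₀,
    ?_, x₀, y₀, hx, hy, hs⟩
  rintro u v ⟨u₀, v₀, hu, hv, hs⟩
  rcases sim_unfold hs with
    (⟨w, T1, T2⟩ | ⟨u', v', TG1, TG2, hs'⟩ | ⟨u₁, v₁, h1, h2, r1, r2, m1, m2⟩) | ⟨t, e1, e2, e3⟩
  · exact Or.inl (Or.inl ⟨w, terminates_prepend hu T1, terminates_prepend hv T2⟩)
  · exact Or.inl (Or.inr (Or.inl ⟨u', v', Relation.TransGen.trans_right hu TG1,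
      Relation.TransGen.trans_right hv TG2,
      u', v', Relation.ReflTransGen.refl, Relation.ReflTransGen.refl, hs'⟩))
  · exact Or.inl (Or.inr (Or.inr ⟨u₁, v₁, hu.trans h1, hv.trans h2, r1, r2,
      fun φ s hs => (m1 φ s hs).imp fun t ht =>
        ⟨ht.1, s, t, Relation.ReflTransGen.refl, Relation.ReflTransGen.refl, ht.2⟩,
      fun φ s hs => (m2 φ s hs).imp fun t ht =>
        ⟨ht.1, s, t, Relation.ReflTransGen.refl, Relation.ReflTransGen.refl, ht.2⟩⟩))
  · exact Or.inr ⟨t, hu.trans e1, e2, e3⟩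

section StripLeft

lemma simA_aux (hA : ActionDet step) {u v : S} {u₀ : S}
    (hu : Relation.ReflTransGen (Silent step τ) u₀ u) :
    ∀ s' v₀, Relation.ReflTransGen (Silent step τ) u₀ s' →
      Relation.ReflTransGen (Silent step τ) s' u →
      Relation.ReflTransGen (Silent step τ) v v₀ →
      Sim step τ res s' v₀ →
      SimF step τ res (fun p q => ∃ p₀ q₀, Relation.ReflTransGen (Silent step τ) p₀ p ∧
        Relation.ReflTransGen (Silent step τ) q q₀ ∧ Sim step τ res p₀ q₀) u v := by
  induction hu using Relation.ReflTransGen.head_induction_on with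
  | refl =>
    intro s' v₀ h1 _ hv hs
    exact simF_mono
      (fun p q hpq => ⟨p, q, Relation.ReflTransGen.refl, Relation.ReflTransGen.refl, hpq⟩)
      (sim_unfold (sim_prepend h1 hv hs))
  | head hstep hcu ih =>
    intro s' v₀ h1 h2 hv hs
    rcases h1.cases_head with rfl | ⟨c', hc', hcs'⟩
    · -- s' is the current head point
      rcases sim_unfold hs with
        (⟨w, T1, T2⟩ | ⟨s₂, y₂, TG1, TG2, hs'⟩ | ⟨s₁, y₁, e1, e2, r1, r2, m1, m2⟩) |
        ⟨t, e1, e2, e3⟩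
      · exact Or.inl (Or.inl ⟨w, terminates_forward hA T1 h2, terminates_prepend hv T2⟩)
      · obtain ⟨xm, hxm, hxs₂⟩ := Relation.TransGen.head'_iff.mp TG1
        cases hA _ _ _ _ hxm hstep
        rcases silent_lin hA hcu s₂ hxs₂ with hus₂ | hs₂u
        · exact simF_mono
            (fun p q hpq => ⟨p, q, Relation.ReflTransGen.refl, Relation.ReflTransGen.refl, hpq⟩)
            (sim_unfold (sim_prepend hus₂ (hv.trans TG2.to_reflTransGen) hs'))
        · exact ih s₂ y₂ hxs₂ hs₂u (hv.trans TG2.to_reflTransGen) hs'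
      · have hus₁ : Relation.ReflTransGen (Silent step τ) u s₁ := by
          rcases silent_lin hA h2 s₁ e1 with h | h
          · exact h
          · cases ready_rtg_eq r1 h; exact Relation.ReflTransGen.refl
        exact Or.inl (Or.inr (Or.inr ⟨s₁, y₁, hus₁, hv.trans e2, r1, r2,
          fun φ s hsx => (m1 φ s hsx).imp fun t ht =>
            ⟨ht.1, s, t, Relation.ReflTransGen.refl, Relation.ReflTransGen.refl, ht.2⟩,
          fun φ s hsx => (m2 φ s hsx).imp fun t ht =>
            ⟨ht.1, s, t, Relation.ReflTransGen.refl, Relation.ReflTransGen.refl, ht.2⟩⟩))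
      · have hut : Relation.ReflTransGen (Silent step τ) u t := by
          rcases silent_lin hA h2 t e1 with h | h
          · exact h
          · cases terminal_rtg_eq e2 h; exact Relation.ReflTransGen.refl
        exact Or.inr ⟨t, hut, e2, e3⟩
    · cases hA _ _ _ _ hc' hstep
      exact ih s' v₀ hcs' h2 hv hs

/-- Stripping silent steps on the left and prepending on the right preserves similarity. -/
lemma simA (hA : ActionDet step) {x₀ x y y₀ : S}
    (hx : Relation.ReflTransGen (Silent step τ) x₀ x)
    (hy : Relation.ReflTransGen (Silent step τ) y y₀)
    (hs : Sim step τ res x₀ y₀) : Sim step τ res x y := by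
  refine ⟨fun p q => ∃ p₀ q₀, Relation.ReflTransGen (Silent step τ) p₀ p ∧
    Relation.ReflTransGen (Silent step τ) q q₀ ∧ Sim step τ res p₀ q₀,
    ?_, x₀, y₀, hx, hy, hs⟩
  rintro u v ⟨u₀, v₀, hu, hv, hs⟩
  exact simA_aux hA hu u₀ v₀ Relation.ReflTransGen.refl hu hv hs

end StripLeft

section StripRight

lemma simB_aux (hA : ActionDet step) {u v : S} {v₀ : S}
    (hv : Relation.ReflTransGen (Silent step τ) v₀ v) :
    ∀ s' u₀, Relation.ReflTransGen (Silent step τ) v₀ s' →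
      Relation.ReflTransGen (Silent step τ) s' v →
      Relation.ReflTransGen (Silent step τ) u u₀ →
      Sim step τ res u₀ s' →
      SimF step τ res (fun p q => ∃ p₀ q₀, Relation.ReflTransGen (Silent step τ) p p₀ ∧
        Relation.ReflTransGen (Silent step τ) q₀ q ∧ Sim step τ res p₀ q₀) u v := by
  induction hv using Relation.ReflTransGen.head_induction_on with
  | refl =>
    intro s' u₀ h1 _ hu hs
    exact simF_mono
      (fun p q hpq => ⟨p, q, Relation.ReflTransGen.refl, Relation.ReflTransGen.refl, hpq⟩)
      (sim_unfold (sim_prepend hu h1 hs))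
  | head hstep hcv ih =>
    intro s' u₀ h1 h2 hu hs
    rcases h1.cases_head with rfl | ⟨c', hc', hcs'⟩
    · rcases sim_unfold hs with
        (⟨w, T1, T2⟩ | ⟨u₂, s₂, TG1, TG2, hs'⟩ | ⟨u₁, s₁, e1, e2, r1, r2, m1, m2⟩) |
        ⟨t, e1, e2, e3⟩
      · exact Or.inl (Or.inl ⟨w, terminates_prepend hu T1, terminates_forward hA T2 h2⟩)
      · obtain ⟨xm, hxm, hxs₂⟩ := Relation.TransGen.head'_iff.mp TG2
        cases hA _ _ _ _ hxm hstep
        rcases silent_lin hA hcv s₂ hxs₂ with hvs₂ | hs₂v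
        · exact simF_mono
            (fun p q hpq => ⟨p, q, Relation.ReflTransGen.refl, Relation.ReflTransGen.refl, hpq⟩)
            (sim_unfold (sim_prepend (hu.trans TG1.to_reflTransGen) hvs₂ hs'))
        · exact ih s₂ u₂ hxs₂ hs₂v (hu.trans TG1.to_reflTransGen) hs'
      · have hvs₁ : Relation.ReflTransGen (Silent step τ) v s₁ := by
          rcases silent_lin hA h2 s₁ e2 with h | h
          · exact h
          · cases ready_rtg_eq r2 h; exact Relation.ReflTransGen.refl
        exact Or.inl (Or.inr (Or.inr ⟨u₁, s₁, hu.trans e1, hvs₁, r1, r2,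
          fun φ s hsx => (m1 φ s hsx).imp fun t ht =>
            ⟨ht.1, s, t, Relation.ReflTransGen.refl, Relation.ReflTransGen.refl, ht.2⟩,
          fun φ s hsx => (m2 φ s hsx).imp fun t ht =>
            ⟨ht.1, s, t, Relation.ReflTransGen.refl, Relation.ReflTransGen.refl, ht.2⟩⟩))
      · exact Or.inr ⟨t, hu.trans e1, e2, e3⟩
    · cases hA _ _ _ _ hc' hstep
      exact ih s' u₀ hcs' h2 hu hs

/-- Prepending silent steps on the left and stripping on the right preserves similarity. -/
lemma simB (hA : ActionDet step) {x x₀ y₀ y : S}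
    (hx : Relation.ReflTransGen (Silent step τ) x x₀)
    (hy : Relation.ReflTransGen (Silent step τ) y₀ y)
    (hs : Sim step τ res x₀ y₀) : Sim step τ res x y := by
  refine ⟨fun p q => ∃ p₀ q₀, Relation.ReflTransGen (Silent step τ) p p₀ ∧
    Relation.ReflTransGen (Silent step τ) q₀ q ∧ Sim step τ res p₀ q₀,
    ?_, x₀, y₀, hx, hy, hs⟩
  rintro u v ⟨u₀, v₀, hu, hv, hs⟩
  exact simB_aux hA hv v₀ u₀ Relation.ReflTransGen.refl hv hu hs

end StripRight

lemma claim1 (hA : ActionDet step) :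
    ∀ n (p pt q : S), SN (Silent step τ) n p pt → Terminal step pt →
      Sim step τ res p q → Terminates step τ res q (res pt) ∨ res pt = none := by
  intro n
  induction n using Nat.strong_induction_on with
  | _ n ih =>
    intro p pt q hsn ht hsim
    rcases sim_unfold hsim with
      (⟨w, T1, T2⟩ | ⟨p', q', TG1, TG2, hs⟩ | ⟨p₁, q₁, e1, _, r1, _, _, _⟩) | ⟨t, e1, e2, e3⟩
    · have hw : w = res pt := terminates_unique hA T1 ⟨pt, sn_to_rtg hsn, ht, rfl⟩
      exact Or.inl (hw ▸ T2)
    · obtain ⟨m, hm, hsn'⟩ := tg_after hA TG1 hsn ht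
      rcases ih m hm p' pt q' hsn' ht hs with h | h
      · exact Or.inl (terminates_prepend TG2.to_reflTransGen h)
      · exact Or.inr h
    · exact absurd (⟨pt, sn_to_rtg hsn, ht, rfl⟩ : Terminates step τ res p (res pt))
        fun htp => terminates_ready_false hA htp e1 r1
    · have hw : (none : Option V) = res pt :=
        terminates_unique hA ⟨t, e1, e2, e3⟩ ⟨pt, sn_to_rtg hsn, ht, rfl⟩
      exact Or.inr hw.symm

lemma claim1' (hA : ActionDet step) {p q : S} {w : Option V}
    (hsim : Sim step τ res p q) (hp : Terminates step τ res p w) :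
    Terminates step τ res q w ∨ w = none := by
  obtain ⟨pt, h1, h2, h3⟩ := hp
  obtain ⟨n, hn⟩ := rtg_to_sn h1
  subst h3
  exact claim1 hA n p pt q hn h2 hsim

lemma claim3 (hA : ActionDet step) :
    ∀ n (q qt p : S), SN (Silent step τ) n q qt → Terminal step qt →
      Sim step τ res p q →
      Terminates step τ res p (res qt) ∨ Terminates step τ res p none := by
  intro n
  induction n using Nat.strong_induction_on with
  | _ n ih =>
    intro q qt p hsn ht hsim
    rcases sim_unfold hsim with
      (⟨w, T1, T2⟩ | ⟨p', q', TG1, TG2, hs⟩ | ⟨p₁, q₁, _, e2, _, r2, _, _⟩) | ⟨t, e1, e2, e3⟩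
    · have hw : w = res qt := terminates_unique hA T2 ⟨qt, sn_to_rtg hsn, ht, rfl⟩
      exact Or.inl (hw ▸ T1)
    · obtain ⟨m, hm, hsn'⟩ := tg_after hA TG2 hsn ht
      rcases ih m hm q' qt p' hsn' ht hs with h | h
      · exact Or.inl (terminates_prepend TG1.to_reflTransGen h)
      · exact Or.inr (terminates_prepend TG1.to_reflTransGen h)
    · exact absurd (⟨qt, sn_to_rtg hsn, ht, rfl⟩ : Terminates step τ res q (res qt))
        fun htq => terminates_ready_false hA htq e2 r2
    · exact Or.inr ⟨t, e1, e2, e3⟩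

lemma claim3' (hA : ActionDet step) {p q : S} {w : Option V}
    (hsim : Sim step τ res p q) (hq : Terminates step τ res q w) :
    Terminates step τ res p w ∨ Terminates step τ res p none := by
  obtain ⟨qt, h1, h2, h3⟩ := hq
  obtain ⟨n, hn⟩ := rtg_to_sn h1
  subst h3
  exact claim3 hA n q qt p hn h2 hsim

end SimHelpers

section MainProof

variable {S E V : Type*} {step : S → E → S → Prop} {τ : E} {res : S → Option V}

lemma sim_refl' (σ : S) : Sim step τ res σ σ := by
  refine ⟨Eq, ?_, rfl⟩
  rintro a _ rfl
  by_cases h1 : ∃ x, step a τ x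
  · obtain ⟨x, hx⟩ := h1
    exact Or.inl (Or.inr (Or.inl ⟨x, x, Relation.TransGen.single hx,
      Relation.TransGen.single hx, rfl⟩))
  by_cases h2 : ∃ φ x, step a φ x
  · obtain ⟨φ, x, hx⟩ := h2
    have hrdy : Ready step τ a := ⟨⟨φ, x, hx⟩, fun ψ y hy hψ => h1 ⟨y, hψ ▸ hy⟩⟩
    exact Or.inl (Or.inr (Or.inr ⟨a, a, Relation.ReflTransGen.refl,
      Relation.ReflTransGen.refl, hrdy, hrdy,
      fun ψ y hy => ⟨y, hy, rfl⟩, fun ψ y hy => ⟨y, hy, rfl⟩⟩))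
  · have hterm : Terminal step a := fun φ x hx => h2 ⟨φ, x, hx⟩
    exact Or.inl (Or.inl ⟨res a, ⟨a, Relation.ReflTransGen.refl, hterm, rfl⟩,
      ⟨a, Relation.ReflTransGen.refl, hterm, rfl⟩⟩)

lemma sim_trans' (hA : ActionDet step) {σ₁ σ₂ σ₃ : S}
    (h12 : Sim step τ res σ₁ σ₂) (h23 : Sim step τ res σ₂ σ₃) : Sim step τ res σ₁ σ₃ := by
  refine ⟨fun x z => ∃ y, Sim step τ res x y ∧ Sim step τ res y z, ?_, σ₂, h12, h23⟩
  rintro a c ⟨b, hab, hbc⟩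
  rcases sim_unfold hab with
    (⟨w, Ta, Tb⟩ | ⟨a₂, b₂, TGa, TGb, hs⟩ | ⟨a₁, b₁, haa₁, hbb₁, rdya, rdyb, m1, m2⟩) |
    ⟨ae, he1, he2, he3⟩
  · -- Bisim-Term on (a,b)
    rcases claim1' hA hbc Tb with hc | rfl
    · exact Or.inl (Or.inl ⟨w, Ta, hc⟩)
    · exact Or.inr Ta
  · -- Bisim-Silent on (a,b) : a →⁺ a₂, b →⁺ b₂, Sim a₂ b₂
    rcases sim_unfold hbc with
      (⟨w, Tb, Tc⟩ | ⟨b₂', c₂, TGb', TGc, hs'⟩ | ⟨b₁, c₁, hbb₁, hcc₁, rdyb, rdyc, m1, m2⟩) |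
      ⟨bt, hbt, htm, hnone⟩
    · -- b terminates with w
      have hb₂ : Terminates step τ res b₂ w := terminates_forward hA Tb TGb.to_reflTransGen
      rcases claim3' hA hs hb₂ with h | h
      · exact Or.inl (Or.inl ⟨w, terminates_prepend TGa.to_reflTransGen h, Tc⟩)
      · exact Or.inr (terminates_prepend TGa.to_reflTransGen h)
    · -- both silent: align b₂ and b₂'
      rcases silent_lin hA TGb.to_reflTransGen b₂' TGb'.to_reflTransGen with h | h
      · have hs2 : Sim step τ res a₂ b₂' := simB hA Relation.ReflTransGen.refl h hs
        exact Or.inl (Or.inr (Or.inl ⟨a₂, c₂, TGa, TGc, b₂', hs2, hs'⟩))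
      · have hs2 : Sim step τ res b₂ c₂ := simA hA h Relation.ReflTransGen.refl hs'
        exact Or.inl (Or.inr (Or.inl ⟨a₂, c₂, TGa, TGc, b₂, hs, hs2⟩))
    · -- extern on (b,c)
      have hb₂b₁ : Relation.ReflTransGen (Silent step τ) b₂ b₁ := by
        rcases silent_lin hA TGb.to_reflTransGen b₁ hbb₁ with h | h
        · exact h
        · cases ready_rtg_eq rdyb h; exact Relation.ReflTransGen.refl
      have hs2 : Sim step τ res a₂ b₁ := simB hA Relation.ReflTransGen.refl hb₂b₁ hs
      rcases sim_unfold hs2 with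
        (⟨w, Ta₂, Tb₁⟩ | ⟨a₃, b₃, TGa₃, TGb₃, _⟩ |
          ⟨a₁, b₁', ha₁, hb₁', rdya, rdyb', m1', m2'⟩) | ⟨ae, hae, hte, hre⟩
      · exact absurd rdyb fun r =>
          terminates_ready_false hA Tb₁ Relation.ReflTransGen.refl r
      · obtain ⟨x, hx, _⟩ := Relation.TransGen.head'_iff.mp TGb₃
        exact absurd rfl (rdyb.2 τ x hx)
      · cases ready_rtg_eq rdyb hb₁'
        refine Or.inl (Or.inr (Or.inr ⟨a₁, c₁, TGa.to_reflTransGen.trans ha₁, hcc₁,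
          rdya, rdyc, ?_, ?_⟩))
        · intro φ a'' hstep
          obtain ⟨b'', hb'', hsab⟩ := m1' φ a'' hstep
          obtain ⟨c'', hc'', hsbc⟩ := m1 φ b'' hb''
          exact ⟨c'', hc'', b'', hsab, hsbc⟩
        · intro φ c'' hstep
          obtain ⟨b'', hb'', hscb⟩ := m2 φ c'' hstep
          obtain ⟨a'', ha'', hsba⟩ := m2' φ b'' hb''
          exact ⟨a'', ha'', b'', hscb, hsba⟩
      · exact Or.inr ⟨ae, TGa.to_reflTransGen.trans hae, hte, hre⟩
    · -- error on b
      have hb₂bt : Relation.ReflTransGen (Silent step τ) b₂ bt := by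
        rcases silent_lin hA TGb.to_reflTransGen bt hbt with h | h
        · exact h
        · cases terminal_rtg_eq htm h; exact Relation.ReflTransGen.refl
      have hb₂ : Terminates step τ res b₂ none := ⟨bt, hb₂bt, htm, hnone⟩
      have ha₂ : Terminates step τ res a₂ none := by
        rcases claim3' hA hs hb₂ with h | h <;> exact h
      exact Or.inr (terminates_prepend TGa.to_reflTransGen ha₂)
  · -- Bisim-Extern on (a,b)
    rcases sim_unfold hbc with
      (⟨w, Tb, Tc⟩ | ⟨b₂, c₂, TGb, TGc, hs'⟩ | ⟨b₁', c₁, hbb₁', hcc₁, rdyb', rdyc, m1', m2'⟩) |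
      ⟨bt, hbt, htm, hnone⟩
    · exact absurd rdyb fun r => terminates_ready_false hA Tb hbb₁ r
    · -- silent on (b,c)
      have hb₂b₁ : Relation.ReflTransGen (Silent step τ) b₂ b₁ := by
        rcases silent_lin hA hbb₁ b₂ TGb.to_reflTransGen with h | h
        · cases ready_rtg_eq rdyb h; exact Relation.ReflTransGen.refl
        · exact h
      have hs2 : Sim step τ res b₁ c₂ := simA hA hb₂b₁ Relation.ReflTransGen.refl hs'
      rcases sim_unfold hs2 with
        (⟨w, Tb₁, Tc₂⟩ | ⟨b₃, c₃, TGb₃, TGc₃, _⟩ |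
          ⟨b₁'', c₁, hb₁'', hc₂c₁, rdyb'', rdyc, m1', m2'⟩) | ⟨bt, hbt, htm, hnone⟩
      · exact absurd rdyb fun r =>
          terminates_ready_false hA Tb₁ Relation.ReflTransGen.refl r
      · obtain ⟨x, hx, _⟩ := Relation.TransGen.head'_iff.mp TGb₃
        exact absurd rfl (rdyb.2 τ x hx)
      · cases ready_rtg_eq rdyb hb₁''
        refine Or.inl (Or.inr (Or.inr ⟨a₁, c₁, haa₁, TGc.to_reflTransGen.trans hc₂c₁,
          rdya, rdyc, ?_, ?_⟩))
        · intro φ a'' hstep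
          obtain ⟨b'', hb'', hsab⟩ := m1 φ a'' hstep
          obtain ⟨c'', hc'', hsbc⟩ := m1' φ b'' hb''
          exact ⟨c'', hc'', b'', hsab, hsbc⟩
        · intro φ c'' hstep
          obtain ⟨b'', hb'', hscb⟩ := m2' φ c'' hstep
          obtain ⟨a'', ha'', hsba⟩ := m2 φ b'' hb''
          exact ⟨a'', ha'', b'', hscb, hsba⟩
      · have : bt = b₁ := ready_rtg_eq rdyb hbt
        subst this
        obtain ⟨φ, x, hx⟩ := rdyb.1
        exact absurd hx (htm φ x)
    · -- extern on (b,c) : align b₁ and b₁'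
      have hb : b₁' = b₁ := by
        rcases silent_lin hA hbb₁ b₁' hbb₁' with h | h
        · exact ready_rtg_eq rdyb h
        · exact (ready_rtg_eq rdyb' h).symm
      subst hb
      refine Or.inl (Or.inr (Or.inr ⟨a₁, c₁, haa₁, hcc₁, rdya, rdyc, ?_, ?_⟩))
      · intro φ a'' hstep
        obtain ⟨b'', hb'', hsab⟩ := m1 φ a'' hstep
        obtain ⟨c'', hc'', hsbc⟩ := m1' φ b'' hb''
        exact ⟨c'', hc'', b'', hsab, hsbc⟩
      · intro φ c'' hstep
        obtain ⟨b'', hb'', hscb⟩ := m2' φ c'' hstep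
        obtain ⟨a'', ha'', hsba⟩ := m2 φ b'' hb''
        exact ⟨a'', ha'', b'', hscb, hsba⟩
    · -- error on b, but b reaches a ready state: contradiction
      have hbt₁ : Terminal step b₁ := by
        rcases silent_lin hA hbb₁ bt hbt with h | h
        · cases ready_rtg_eq rdyb h; exact htm
        · cases terminal_rtg_eq htm h; exact htm
      obtain ⟨φ, x, hx⟩ := rdyb.1
      exact absurd hx (hbt₁ φ x)
  · exact Or.inr ⟨ae, he1, he2, he3⟩

end MainProof

theorem sim_preorder (step : S → E → S → Prop) (τ : E) (res : S → Option V)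
    (hA : ActionDet step) (hT : TauDet step τ) (hR : ResTerminal step res) :
    (∀ σ, Sim step τ res σ σ) ∧
    (∀ σ₁ σ₂ σ₃, Sim step τ res σ₁ σ₂ → Sim step τ res σ₂ σ₃ →
      Sim step τ res σ₁ σ₃) := by
  exact ⟨fun σ => sim_refl' σ, fun σ₁ σ₂ σ₃ h12 h23 => sim_trans' hA h12 h23⟩
end
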